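/- Let G be a finite perfect group and E a representation group of G (a stem extension π : E ↠ G, ker π ⊆ Z(E) ∩ [E,E], of maximal order among stem extensions of G). Then for every normalized 3-cocycle ω on E with values in ℂˣ and every subgroup B ⊆ Z(E), the subgroup B is ω-admissible: there exists an ω-admissible pair (τ, ν) for B. In particular, for every g ∈ Z(E), the 2-cocycle θ_g on E is a 2-coboundary of E. -/

import Mathlib

/-- Conjugation: `g^x = x⁻¹ * g * x`. -/
def cjg {G : Type*} [Group G] (g x : G) : G := x⁻¹ * g * x

/-- A normalized 3-cocycle on `G` with values in `ℂˣ`. -/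
def IsNormalized3Cocycle {G : Type*} [Group G] (ω : G → G → G → ℂˣ) : Prop :=
  (∀ x y z w, ω y z w * ω x (y * z) w * ω x y z = ω (x * y) z w * ω x y (z * w)) ∧
  (∀ x y z, (x = 1 ∨ y = 1 ∨ z = 1) → ω x y z = 1)

/-- `θ_g(x,y) = ω(g,x,y)·ω(x,y,g^{xy}) / ω(x,g^x,y)`. -/
def theta {G : Type*} [Group G] (ω : G → G → G → ℂˣ) (g x y : G) : ℂˣ :=
  ω g x y * ω x y (cjg g (x * y)) / ω x (cjg g x) y

/-- `γ_g(x,y) = ω(x,y,g)·ω(g,x^g,y^g) / ω(x,g,y^g)`. -/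
def gam {G : Type*} [Group G] (ω : G → G → G → ℂˣ) (g x y : G) : ℂˣ :=
  ω x y g * ω g (cjg x g) (cjg y g) / ω x g (cjg y g)

/-- A 2-coboundary of `G` with values in `ℂˣ`. -/
def Is2Coboundary {G : Type*} [Group G] (β : G → G → ℂˣ) : Prop :=
  ∃ f : G → ℂˣ, f 1 = 1 ∧ ∀ x y, β x y = f x * f y / f (x * y)

/-- A (normalized) 2-cocycle of `G` with values in `ℂˣ`. -/
def Is2Cocycle {G : Type*} [Group G] (β : G → G → ℂˣ) : Prop :=
  (∀ x, β x 1 = 1 ∧ β 1 x = 1) ∧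
  (∀ x y z, β x y * β (x * y) z = β y z * β x (y * z))

/-- An ω-admissible pair `(τ, ν)` for a subgroup `A`. -/
def IsAdmissiblePair {G : Type*} [Group G] (ω : G → G → G → ℂˣ) (A : Subgroup G)
    (τ : A → G → ℂˣ) (ν : A → (G →* ℂˣ)) : Prop :=
  (∀ x, τ 1 x = 1) ∧ (∀ a, τ a 1 = 1) ∧
  (∀ (a : A) (x y : G), theta ω (a : G) x y = τ a x * τ a y / τ a (x * y)) ∧
  (ν 1 = 1) ∧
  (∀ (a b : A) (g : G),
    theta ω g (a : G) (b : G) * (τ a g * τ b g / τ (a * b) g)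
      = ν a g * ν b g / ν (a * b) g)

/-!
Since `G` is perfect and `ker π ≤ [E, E]`, `E` is perfect. The heart of the matter is
`H²(E, ℂˣ) = 1`: a 2-cocycle can be normalized to take values in `|E|`-th roots of unity, so it
defines a finite central extension `K` of `E`; a minimal subgroup of `K` mapping onto `E` is
perfect, hence (three subgroups lemma) a stem extension of `G`, and maximality of `|E|` makes it
map isomorphically onto `E`, which splits the extension and trivializes the cocycle.

For central `g`, `θ_g` is a 2-cocycle, hence `θ_g = δτ_g`. For central `a, b` the identity
`θ_{gh}(a,b) θ_{ab}(g,h) = θ_g(a,b) θ_h(a,b) θ_a(g,h) θ_b(g,h)` turns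
`g ↦ θ_g(a,b) τ_a(g) τ_b(g) / τ_{ab}(g)` into a character of the perfect group `E`, which is
trivial; so `ν = 1` completes an admissible pair.
-/

open Subgroup

lemma cjg_eq_self_of_commute {G : Type*} [Group G] {g x : G} (h : Commute g x) : cjg g x = g := by
  rw [cjg, mul_assoc, h.eq, inv_mul_cancel_left]

section Cohomology

variable {E : Type*} [Group E]

def coboundary (f : E → ℂˣ) (x y : E) : ℂˣ := f x * f y / f (x * y)

lemma Is2Cocycle.div_coboundary {β : E → E → ℂˣ} (hβ : Is2Cocycle β) {f : E → ℂˣ} (hf : f 1 = 1) :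
    Is2Cocycle (β / coboundary f) := by
  refine ⟨fun x => ⟨?_, ?_⟩, fun x y z => ?_⟩
  · simp [coboundary, hf, (hβ.1 x).1]
  · simp [coboundary, hf, (hβ.1 x).2]
  apply Additive.ofMul.injective
  have h := congrArg Additive.ofMul (hβ.2 x y z)
  simp only [Pi.div_apply, coboundary, ofMul_mul, ofMul_div, mul_assoc] at h ⊢
  linear_combination (norm := abel) h

lemma Is2Coboundary.of_div_coboundary {β : E → E → ℂˣ} {f : E → ℂˣ} (hf : f 1 = 1)
    (h : Is2Coboundary (β / coboundary f)) : Is2Coboundary β := by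
  obtain ⟨t, ht1, ht⟩ := h
  refine ⟨t * f, by simp [ht1, hf], fun x y => ?_⟩
  have := ht x y
  simp only [Pi.div_apply, coboundary, div_eq_iff_eq_mul] at this
  rw [this, Pi.mul_apply, Pi.mul_apply, Pi.mul_apply]
  apply Additive.ofMul.injective
  simp only [ofMul_mul, ofMul_div]
  abel

lemma exists_units_pow_eq {k : Type*} [Field k] [IsAlgClosed k] {n : ℕ} (hn : n ≠ 0) (u : kˣ) :
    ∃ v : kˣ, v ^ n = u := by
  obtain ⟨z, hz⟩ := IsAlgClosed.exists_pow_nat_eq (u : k) (Nat.pos_of_ne_zero hn)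
  have hz' : IsUnit z := (isUnit_pow_iff hn).mp (hz ▸ u.isUnit)
  exact ⟨hz'.unit, Units.ext (by simpa using hz)⟩

/-- Divide by the coboundary of an `|E|`-th root of `x ↦ ∏ y, β x y`. -/
lemma Is2Cocycle.exists_pow_card_eq_one [Finite E] {β : E → E → ℂˣ} (hβ : Is2Cocycle β) :
    ∃ f : E → ℂˣ, f 1 = 1 ∧ ∀ x y, (β / coboundary f) x y ^ Nat.card E = 1 := by
  classical
  have : Fintype E := Fintype.ofFinite E
  set P : E → ℂˣ := fun x => ∏ y, β x y
  have hP (x y : E) : β x y ^ Nat.card E * P (x * y) = P x * P y := by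
    have key := Finset.prod_congr rfl fun z (_ : z ∈ Finset.univ) => hβ.2 x y z
    rw [Finset.prod_mul_distrib, Finset.prod_mul_distrib, Finset.prod_const,
      Fintype.prod_equiv (Equiv.mulLeft y) (fun z => β x (y * z)) (β x) fun _ => rfl] at key
    rw [Nat.card_eq_fintype_card, ← Finset.card_univ, key, mul_comm]
  have hP1 : P 1 = 1 := Finset.prod_eq_one fun y _ => (hβ.1 y).2
  choose r hr using fun x => exists_units_pow_eq (Nat.card_pos (α := E)).ne' (P x)
  refine ⟨Function.update r 1 1, by simp, fun x y => ?_⟩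
  have hroot (x : E) : Function.update r 1 1 x ^ Nat.card E = P x := by
    rcases eq_or_ne x 1 with rfl | hx
    · simp [hP1]
    · rw [Function.update_of_ne hx, hr]
  simp only [Pi.div_apply, coboundary]
  rw [div_pow, div_pow, mul_pow, hroot, hroot, hroot, ← hP,
    mul_div_cancel_right, div_self']

end Cohomology

section Theta

variable {E : Type*} [Group E] {ω : E → E → E → ℂˣ}

/-- Identities between products of values of `ω` are proved in `Additive ℂˣ` by
`linear_combination (norm := abel)`. -/
lemma IsNormalized3Cocycle.ofMul_eq (hω : IsNormalized3Cocycle ω) (x y z w : E) :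
    Additive.ofMul (ω y z w) + Additive.ofMul (ω x (y * z) w) + Additive.ofMul (ω x y z)
      = Additive.ofMul (ω (x * y) z w) + Additive.ofMul (ω x y (z * w)) := by
  simp only [← ofMul_mul, hω.1]

lemma theta_eq_of_commute {g x y : E} (hx : Commute g x) (hy : Commute g y) :
    theta ω g x y = ω g x y * ω x y g / ω x g y := by
  rw [theta, cjg_eq_self_of_commute (hx.mul_right hy), cjg_eq_self_of_commute hx]

lemma theta_eq_of_mem_center {g : E} (hg : g ∈ center E) (x y : E) :
    theta ω g x y = ω g x y * ω x y g / ω x g y :=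
  theta_eq_of_commute (mem_center_iff.mp hg x).symm (mem_center_iff.mp hg y).symm

lemma is2Cocycle_theta (hω : IsNormalized3Cocycle ω) {g : E} (hg : g ∈ center E) :
    Is2Cocycle (theta ω g) := by
  have hcomm (t : E) : t * g = g * t := mem_center_iff.mp hg t
  refine ⟨fun x => ⟨?_, ?_⟩, fun x y z => ?_⟩
  · simp [theta_eq_of_mem_center hg, hω.2]
  · simp [theta_eq_of_mem_center hg, hω.2]
  have h₁ := hω.ofMul_eq g x y z
  have h₂ := hω.ofMul_eq x g y z
  have h₃ := hω.ofMul_eq x y g z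
  have h₄ := hω.ofMul_eq x y z g
  rw [← hcomm x] at h₁
  rw [← hcomm y] at h₂
  rw [← hcomm z] at h₃
  apply Additive.ofMul.injective
  simp only [theta_eq_of_mem_center hg, ofMul_mul, ofMul_div]
  linear_combination (norm := abel) h₁ - h₂ + h₃ - h₄

lemma theta_mul_mul_theta_mul (hω : IsNormalized3Cocycle ω) {a b : E} (ha : a ∈ center E)
    (hb : b ∈ center E) (g h : E) :
    theta ω (g * h) a b * theta ω (a * b) g h
      = theta ω g a b * theta ω h a b * theta ω a g h * theta ω b g h := by
  have hcomm {c : E} (hc : c ∈ center E) (t : E) : Commute t c := mem_center_iff.mp hc t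
  have h₁ := hω.ofMul_eq a b g h
  have h₂ := hω.ofMul_eq a g b h
  have h₃ := hω.ofMul_eq a g h b
  have h₄ := hω.ofMul_eq g a b h
  have h₅ := hω.ofMul_eq g a h b
  have h₆ := hω.ofMul_eq g h a b
  simp only [← (hcomm ha g).eq, ← (hcomm ha h).eq, ← (hcomm hb g).eq, ← (hcomm hb h).eq]
    at h₁ h₂ h₃ h₄ h₅ h₆
  apply Additive.ofMul.injective
  simp only [theta_eq_of_commute (hcomm ha _) (hcomm hb _), theta_eq_of_mem_center ha,
    theta_eq_of_mem_center hb, theta_eq_of_mem_center (mul_mem ha hb), ofMul_mul, ofMul_div]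
  linear_combination (norm := abel) -h₁ + h₂ - h₃ - h₄ + h₅ - h₆

lemma theta_one (hω : IsNormalized3Cocycle ω) (x y : E) : theta ω 1 x y = 1 := by
  simp [theta_eq_of_mem_center (one_mem _), hω.2]

lemma theta_mul_coboundary_mul (hω : IsNormalized3Cocycle ω) {a b : E} (ha : a ∈ center E)
    (hb : b ∈ center E) {τa τb τab : E → ℂˣ} (hτa : ∀ x y, theta ω a x y = coboundary τa x y)
    (hτb : ∀ x y, theta ω b x y = coboundary τb x y)
    (hτab : ∀ x y, theta ω (a * b) x y = coboundary τab x y) (g h : E) :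
    theta ω (g * h) a b * (τa (g * h) * τb (g * h) / τab (g * h))
      = theta ω g a b * (τa g * τb g / τab g) * (theta ω h a b * (τa h * τb h / τab h)) := by
  have hT := congrArg Additive.ofMul (theta_mul_mul_theta_mul hω ha hb g h)
  have ha' := congrArg Additive.ofMul (hτa g h)
  have hb' := congrArg Additive.ofMul (hτb g h)
  have hab' := congrArg Additive.ofMul (hτab g h)
  apply Additive.ofMul.injective
  simp only [coboundary, ofMul_mul, ofMul_div] at hT ha' hb' hab' ⊢
  linear_combination (norm := abel) hT + ha' + hb' - hab'

end Theta

/-- The central extension of `E` by `ℂˣ` defined by `β`, with multiplication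
`(u, x) (v, y) = (u v β(x, y), x y)`; the cocycle proof is a parameter so that the group
structure can use it. -/
@[ext] structure CocycleExtension {E : Type*} [Group E] (β : E → E → ℂˣ) (hβ : Is2Cocycle β) where
  u : ℂˣ
  e : E

namespace CocycleExtension

variable {E : Type*} [Group E] {β : E → E → ℂˣ} {hβ : Is2Cocycle β}

instance : Mul (CocycleExtension β hβ) := ⟨fun p q => ⟨p.u * q.u * β p.e q.e, p.e * q.e⟩⟩
instance : One (CocycleExtension β hβ) := ⟨⟨1, 1⟩⟩
instance : Inv (CocycleExtension β hβ) := ⟨fun p => ⟨(p.u * β p.e p.e⁻¹)⁻¹, p.e⁻¹⟩⟩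

@[simp] lemma mul_u (p q : CocycleExtension β hβ) : (p * q).u = p.u * q.u * β p.e q.e := rfl
@[simp] lemma mul_e (p q : CocycleExtension β hβ) : (p * q).e = p.e * q.e := rfl
@[simp] lemma one_u : (1 : CocycleExtension β hβ).u = 1 := rfl
@[simp] lemma one_e : (1 : CocycleExtension β hβ).e = 1 := rfl
@[simp] lemma inv_u (p : CocycleExtension β hβ) : p⁻¹.u = (p.u * β p.e p.e⁻¹)⁻¹ := rfl
@[simp] lemma inv_e (p : CocycleExtension β hβ) : p⁻¹.e = p.e⁻¹ := rfl

instance : Group (CocycleExtension β hβ) := Group.ofLeftAxioms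
  (fun p q r => by
    apply CocycleExtension.ext
    · apply Additive.ofMul.injective
      have h := congrArg Additive.ofMul (hβ.2 p.e q.e r.e)
      simp only [mul_u, mul_e, ofMul_mul] at h ⊢
      linear_combination (norm := abel) h
    · exact mul_assoc _ _ _)
  (fun p => by ext <;> simp [(hβ.1 p.e).2])
  (fun p => by
    have h := hβ.2 p.e p.e⁻¹ p.e
    rw [mul_inv_cancel, inv_mul_cancel, (hβ.1 _).1, (hβ.1 _).2, mul_one, mul_one] at h
    apply CocycleExtension.ext
    · simp [h]
    · simp)

def proj : CocycleExtension β hβ →* E where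
  toFun p := p.e
  map_one' := rfl
  map_mul' _ _ := rfl

lemma ker_proj_le_center : (proj : CocycleExtension β hβ →* E).ker ≤ center _ := by
  intro p (hp : p.e = 1)
  refine mem_center_iff.mpr fun q => CocycleExtension.ext ?_ (by simp [hp])
  simp [hp, (hβ.1 q.e).1, (hβ.1 q.e).2, mul_comm]

def rootsOfUnitySubgroup (n : ℕ) (hβn : ∀ x y, β x y ^ n = 1) :
    Subgroup (CocycleExtension β hβ) where
  carrier := {p | p.u ^ n = 1}
  mul_mem' hp hq := by simp_all [mul_pow]
  one_mem' := one_pow n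
  inv_mem' hp := by simp_all [mul_pow]

instance [Finite E] (n : ℕ) [NeZero n] (hβn : ∀ x y, β x y ^ n = 1) :
    Finite (rootsOfUnitySubgroup (hβ := hβ) n hβn) :=
  Finite.of_injective
    (fun p => ((⟨p.1.u, (mem_rootsOfUnity n _).mpr p.2⟩ : rootsOfUnity n ℂ), p.1.e))
    fun _ _ hpq => Subtype.ext (CocycleExtension.ext (congrArg (fun t => (t.1.1 : ℂˣ)) hpq)
      (congrArg Prod.snd hpq))

lemma is2Coboundary_of_section (σ : E →* CocycleExtension β hβ) (hσ : ∀ x, (σ x).e = x) :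
    Is2Coboundary β := by
  refine ⟨fun x => (σ x).u⁻¹, by simp, fun x y => ?_⟩
  have h := congrArg u (map_mul σ x y)
  rw [mul_u, hσ, hσ] at h
  change β x y = (σ x).u⁻¹ * (σ y).u⁻¹ / (σ (x * y)).u⁻¹
  rw [h, div_inv_eq_mul, ← mul_inv, inv_mul_cancel_left]

end CocycleExtension

section Perfect

variable {K E G : Type*} [Group K] [Group E] [Group G]

lemma commutator_eq_top_of_surjective_of_ker_le (hG : commutator G = ⊤) {π : E →* G}
    (hπ : Function.Surjective π) (hker : π.ker ≤ commutator E) : commutator E = ⊤ := by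
  have hmap : (commutator E).map π = ⊤ := by
    rw [_root_.commutator_def, map_commutator, ← MonoidHom.range_eq_map,
      MonoidHom.range_eq_top.mpr hπ, ← _root_.commutator_def, hG]
  rw [← sup_eq_left.mpr hker, ← comap_map_eq, hmap, comap_top]

/-- A minimal subgroup mapping onto `E` is perfect, since its commutator subgroup maps onto
`[E, E] = E`. -/
lemma exists_perfect_subgroup_map_eq_top [Finite K] (hE : commutator E = ⊤) {p : K →* E}
    (hp : Function.Surjective p) : ∃ H : Subgroup K, H.map p = ⊤ ∧ commutator H = ⊤ := by
  obtain ⟨H, hH, hmin⟩ := exists_minimal_of_wellFoundedLT (fun H : Subgroup K => H.map p = ⊤)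
    ⟨⊤, by rw [← MonoidHom.range_eq_map, MonoidHom.range_eq_top.mpr hp]⟩
  have hHH : ⁅H, H⁆ = H := by
    refine le_antisymm (commutator_le_self H) (hmin ?_ (commutator_le_self H))
    show map p ⁅H, H⁆ = ⊤
    rw [map_commutator, hH, ← _root_.commutator_def, hE]
  refine ⟨H, hH, map_injective H.subtype_injective ?_⟩
  rw [_root_.commutator_def, map_commutator, ← MonoidHom.range_eq_map, range_subtype, hHH]

/-- Three subgroups lemma: `[[N, K], K] = 1` for `N = ker (π ∘ p)`, hence `[[K, K], N] = 1`. -/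
lemma ker_comp_le_center (hK : commutator K = ⊤) {p : K →* E} {π : E →* G}
    (hp : p.ker ≤ center K) (hπ : π.ker ≤ center E) : (π.comp p).ker ≤ center K := by
  have hmap : ((π.comp p).ker).map p ≤ π.ker := by
    rw [← MonoidHom.comap_ker]
    exact map_comap_le _ _
  have h₁ : ⁅(π.comp p).ker, ⊤⁆ ≤ p.ker := by
    rw [← Subgroup.map_eq_bot_iff, map_commutator, eq_bot_iff,
      ← commutator_top_right_eq_bot_iff_le_center.mpr hπ]
    exact commutator_mono hmap le_top
  have h₂ : ⁅⁅(π.comp p).ker, ⊤⁆, ⊤⁆ = ⊥ :=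
    commutator_top_right_eq_bot_iff_le_center.mpr (h₁.trans hp)
  have h₃ : ⁅⁅(⊤ : Subgroup K), (π.comp p).ker⁆, (⊤ : Subgroup K)⁆ = ⊥ := by
    rwa [commutator_comm ⊤ (π.comp p).ker]
  have := commutator_commutator_eq_bot_of_rotate h₃ h₂
  rwa [← _root_.commutator_def, hK, commutator_top_left_eq_bot_iff_le_center] at this

end Perfect

universe u

def FiniteCentralExtensionsSplit (E : Type u) [Group E] : Prop :=
  ∀ (K : Type u) [Group K] [Finite K] (p : K →* E), Function.Surjective p → p.ker ≤ center K →
    ∃ σ : E →* K, ∀ x, p (σ x) = x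

lemma ker_comp_subtype_le_center {K E : Type*} [Group K] [Group E] {p : K →* E}
    (hp : p.ker ≤ center K) (H : Subgroup K) : (p.comp H.subtype).ker ≤ center H :=
  fun _ hk => mem_center_iff.mpr fun h => Subtype.ext (mem_center_iff.mp (hp hk) h)

lemma finiteCentralExtensionsSplit_of_forall_card_le {E G : Type} [Group E] [Finite E] [Group G]
    (hE : commutator E = ⊤) {π : E →* G} (hπ : Function.Surjective π) (hker : π.ker ≤ center E)
    (hmax : ∀ (F : Type) [Group F] [Finite F] (π' : F →* G),
      Function.Surjective π' → π'.ker ≤ center F ⊓ commutator F → Nat.card F ≤ Nat.card E) :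
    FiniteCentralExtensionsSplit E := by
  intro K _ _ p hp hpker
  obtain ⟨H, hHmap, hHperf⟩ := exists_perfect_subgroup_map_eq_top hE hp
  set p' := p.comp H.subtype
  have hp' : Function.Surjective p' := by
    rw [← MonoidHom.range_eq_top, MonoidHom.range_comp, range_subtype, hHmap]
  have hcard : Nat.card H ≤ Nat.card E := hmax H (π.comp p') (hπ.comp hp')
    (le_inf (ker_comp_le_center hHperf (ker_comp_subtype_le_center hpker H) hker)
      (hHperf ▸ le_top))
  have hbij : Function.Bijective p' := (Nat.bijective_iff_surjective_and_card p').mpr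
    ⟨hp', le_antisymm hcard (Nat.card_le_card_of_surjective p' hp')⟩
  exact ⟨H.subtype.comp (MulEquiv.ofBijective p' hbij).symm.toMonoidHom,
    (MulEquiv.ofBijective p' hbij).apply_symm_apply⟩

lemma FiniteCentralExtensionsSplit.is2Coboundary {E : Type u} [Group E] [Finite E]
    (hE : FiniteCentralExtensionsSplit E) {β : E → E → ℂˣ} (hβ : Is2Cocycle β) :
    Is2Coboundary β := by
  obtain ⟨f, hf1, hfn⟩ := hβ.exists_pow_card_eq_one
  refine Is2Coboundary.of_div_coboundary hf1 ?_
  have : NeZero (Nat.card E) := ⟨Nat.card_pos.ne'⟩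
  set K := CocycleExtension.rootsOfUnitySubgroup (hβ := hβ.div_coboundary hf1) _ hfn
  obtain ⟨σ, hσ⟩ := hE K (CocycleExtension.proj.comp K.subtype)
    (fun x => ⟨⟨⟨1, x⟩, one_pow _⟩, rfl⟩)
    (ker_comp_subtype_le_center CocycleExtension.ker_proj_le_center K)
  exact CocycleExtension.is2Coboundary_of_section (K.subtype.comp σ) hσ

section Admissible

variable {E : Type*} [Group E] {ω : E → E → E → ℂˣ}

lemma exists_isAdmissiblePair (hω : IsNormalized3Cocycle ω) (hE : commutator E = ⊤)
    {B : Subgroup E} (hB : B ≤ center E) (hθ : ∀ a : B, Is2Coboundary (theta ω a)) :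
    ∃ τ ν, IsAdmissiblePair ω B τ ν := by
  classical
  choose t ht1 ht using hθ
  set τ : B → E → ℂˣ := Function.update t 1 1
  have hτ1 (a : B) : τ a 1 = 1 := by
    rcases eq_or_ne a 1 with rfl | ha
    · simp [τ]
    · simp [τ, ha, ht1]
  have hτ (a : B) (x y : E) : theta ω a x y = coboundary (τ a) x y := by
    rcases eq_or_ne a 1 with rfl | ha
    · simp [τ, coboundary, theta_one hω]
    · rw [show τ a = t a from Function.update_of_ne ha _ _]
      exact ht a x y
  refine ⟨τ, 1, fun x => by simp [τ], hτ1, hτ, rfl, fun a b g => ?_⟩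
  let χ : E →* ℂˣ := MonoidHom.mk' (fun g => theta ω g a b * (τ a g * τ b g / τ (a * b) g))
    (theta_mul_coboundary_mul hω (hB a.2) (hB b.2) (hτ a) (hτ b) (hτ (a * b)))
  have hχ : χ g = 1 := Abelianization.commutator_subset_ker χ (hE ▸ mem_top g)
  simp only [Pi.one_apply, MonoidHom.one_apply, mul_one, div_one]
  exact hχ

end Admissible

theorem representation_group_admissible_general
    {G E : Type} [Group G] [Group E] [Finite E]
    (hG : commutator G = ⊤)
    (π : E →* G) (hsurj : Function.Surjective π)
    (hstem : π.ker ≤ Subgroup.center E ⊓ commutator E)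
    (hmax : ∀ (F : Type) [Group F] [Finite F] (π' : F →* G),
      Function.Surjective π' → π'.ker ≤ Subgroup.center F ⊓ commutator F →
      Nat.card F ≤ Nat.card E)
    (ω : E → E → E → ℂˣ) (hω : IsNormalized3Cocycle ω) :
    (∀ B : Subgroup E, B ≤ Subgroup.center E →
      ∃ (τ : ↥B → E → ℂˣ) (ν : ↥B → (E →* ℂˣ)), IsAdmissiblePair ω B τ ν) ∧
    (∀ g ∈ Subgroup.center E, Is2Coboundary (theta ω g)) := by
  obtain ⟨hker_center, hker_commutator⟩ := le_inf_iff.mp hstem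
  have hE : commutator E = ⊤ :=
    commutator_eq_top_of_surjective_of_ker_le hG hsurj hker_commutator
  have hsplit : FiniteCentralExtensionsSplit E :=
    finiteCentralExtensionsSplit_of_forall_card_le hE hsurj hker_center hmax
  have hθ (g : E) (hg : g ∈ center E) : Is2Coboundary (theta ω g) :=
    hsplit.is2Coboundary (is2Cocycle_theta hω hg)
  exact ⟨fun B hB => exists_isAdmissiblePair hω hE hB fun a => hθ a (hB a.2), hθ⟩

theorem representation_group_admissible
    {G E : Type} [Group G] [Finite G] [Group E] [Finite E]
    (hG : commutator G = ⊤)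
    (π : E →* G) (hsurj : Function.Surjective π)
    (hstem : π.ker ≤ Subgroup.center E ⊓ commutator E)
    (hmax : ∀ (F : Type) [Group F] [Finite F] (π' : F →* G),
      Function.Surjective π' → π'.ker ≤ Subgroup.center F ⊓ commutator F →
      Nat.card F ≤ Nat.card E)
    (ω : E → E → E → ℂˣ) (hω : IsNormalized3Cocycle ω) :
    (∀ B : Subgroup E, B ≤ Subgroup.center E →
      ∃ (τ : ↥B → E → ℂˣ) (ν : ↥B → (E →* ℂˣ)), IsAdmissiblePair ω B τ ν) ∧
    (∀ g ∈ Subgroup.center E, Is2Coboundary (theta ω g)) :=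
  representation_group_admissible_general hG π hsurj hstem hmax ω hω
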